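/- arXiv:2308.09347 — 5 statements merged into one kernel-verified Lean document; each statement's English description precedes it below -/
import Mathlib

section
/- Let n, m be positive integers with n > 2m, and let A, B, C, D be nonzero real numbers. If the polynomial P(x) = A x^n + B x^{n-m} + C x^m + D has a double positive real root (i.e., there exists α > 0 with P(α) = 0 and P'(α) = 0), then AD - BC ≥ 0. -/
/-!
Put `a = A α^n`, `b = B α^(n-m)`, `c = C α^m`. A double root at `α` gives the two linear
relations `a + b + c + D = 0` (from `P α = 0`) and `n a + (n - m) b + m c = 0` (from `α P'(α) = 0`).
Eliminating `a` and `D` between them yields `n² (a D - b c) = m (n - m) (b - c)²`, and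
`a D - b c = (A D - B C) α^n` because the exponents of `b` and `c` add up to `n`.
-/

theorem mul_natCast_mul_pow_pred (k : ℕ) (x : ℝ) : x * (k * x ^ (k - 1)) = k * x ^ k := by
  rcases k with _ | k
  · simp
  · simp only [Nat.add_sub_cancel, pow_succ]
    ring

theorem mul_deriv_monomial (A x : ℝ) (k : ℕ) :
    x * deriv (fun x => A * x ^ k) x = k * (A * x ^ k) := by
  rw [((hasDerivAt_pow k x).const_mul A).deriv, mul_left_comm, mul_natCast_mul_pow_pred,
    mul_left_comm]

theorem mul_deriv_fourTerm (A B C D x : ℝ) (n m : ℕ) :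
    x * deriv (fun x => A * x ^ n + B * x ^ (n - m) + C * x ^ m + D) x
      = n * (A * x ^ n) + (n - m : ℕ) * (B * x ^ (n - m)) + m * (C * x ^ m) := by
  have hdiff (E : ℝ) (k : ℕ) : DifferentiableAt ℝ (fun x => E * x ^ k) x := by fun_prop
  rw [deriv_add_const, deriv_fun_add (by fun_prop) (hdiff C m),
    deriv_fun_add (hdiff A n) (hdiff B _)]
  simp only [mul_add, mul_deriv_monomial]

theorem sq_mul_sub_mul_eq_of_linear_relations {a b c D n m : ℝ}
    (h0 : a + b + c + D = 0) (h1 : n * a + (n - m) * b + m * c = 0) :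
    n ^ 2 * (a * D - b * c) = m * (n - m) * (b - c) ^ 2 := by
  linear_combination (n ^ 2 * a) * h0 + (-(n * a) - m * b - (n - m) * c) * h1

theorem sq_mul_pow_mul_sub_eq_of_double_root {n m : ℕ} (hmn : m ≤ n) {A B C D α : ℝ}
    (h0 : A * α ^ n + B * α ^ (n - m) + C * α ^ m + D = 0)
    (h1 : deriv (fun x => A * x ^ n + B * x ^ (n - m) + C * x ^ m + D) α = 0) :
    (n : ℝ) ^ 2 * (α ^ n * (A * D - B * C))
      = m * (n - m) * (B * α ^ (n - m) - C * α ^ m) ^ 2 := by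
  have h1' := mul_deriv_fourTerm A B C D α n m
  rw [h1, mul_zero, Nat.cast_sub hmn] at h1'
  rw [← sq_mul_sub_mul_eq_of_linear_relations h0 h1'.symm, ← pow_sub_mul_pow α hmn]
  ring

theorem stmt_0_general (n m : ℕ) (hnm : 2 * m < n)
    (A B C D : ℝ)
    (P : ℝ → ℝ) (hP : P = fun x => A * x ^ n + B * x ^ (n - m) + C * x ^ m + D)
    (α : ℝ) (hα : 0 < α) (h0 : P α = 0) (h1 : deriv P α = 0) :
    A * D - B * C ≥ 0 := by
  subst hP
  have hmn : m ≤ n := by omega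
  have hscale : (0 : ℝ) < (n : ℝ) ^ 2 * α ^ n := by
    have : (0 : ℝ) < n := by exact_mod_cast (by omega : 0 < n)
    positivity
  have hm_le : (m : ℝ) ≤ n := by exact_mod_cast hmn
  have hsq : 0 ≤ (n : ℝ) ^ 2 * α ^ n * (A * D - B * C) := by
    rw [mul_assoc, sq_mul_pow_mul_sub_eq_of_double_root hmn h0 h1]
    have : (0 : ℝ) ≤ n - m := by linarith
    positivity
  exact nonneg_of_mul_nonneg_right hsq hscale

theorem stmt_0 (n m : ℕ) (hm : 0 < m) (hnm : 2 * m < n)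
    (A B C D : ℝ) (hA : A ≠ 0) (hB : B ≠ 0) (hC : C ≠ 0) (hD : D ≠ 0)
    (P : ℝ → ℝ) (hP : P = fun x => A * x ^ n + B * x ^ (n - m) + C * x ^ m + D)
    (α : ℝ) (hα : 0 < α) (h0 : P α = 0) (h1 : deriv P α = 0) :
    A * D - B * C ≥ 0 :=
  stmt_0_general n m hnm A B C D P hP α hα h0 h1
end

section
/- Let n, m be positive integers with n > 2m, let A, B, C, D be nonzero reals, and suppose α > 0 satisfies P(α) = P'(α) = 0 for P(x) = A x^n + B x^{n-m} + C x^m + D. Then m α^{m-1} (AD - BC) = (n-m) α^{n-m-1} (α^m A + B)^2, and in particular AD - BC = ((n-m)/m) α^{n-2m} (α^m A + B)^2. -/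
/-!
Put `x = α ^ m` and `y = α ^ (n - 2m)`. Then `P(α) = 0` reads `A x² y + B x y + C x + D = 0`, and
`α P'(α) = 0`, divided by `x`, reads `n A x y + (n - m) B y + m C = 0`. Subtracting `x A + B` times the
second equation from `m A` times the first eliminates `C x` and leaves
`m (A D - B C) = (n - m) y (x A + B)²`.
-/

theorem mul_natCast_mul_pow_sub_one {R : Type*} [Semiring R] (x : R) (n : ℕ) :
    x * (n * x ^ (n - 1)) = n * x ^ n := by
  rcases n with _ | n
  · simp
  · rw [Nat.add_sub_cancel, ← mul_assoc, ← (Nat.cast_commute _ x).eq, mul_assoc, ← pow_succ']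

theorem mul_deriv_pow_add_pow_add_pow_add_const {𝕜 : Type*} [NontriviallyNormedField 𝕜]
    (A B C D : 𝕜) (n k m : ℕ) (x : 𝕜) :
    x * deriv (fun x => A * x ^ n + B * x ^ k + C * x ^ m + D) x
      = n * A * x ^ n + k * B * x ^ k + m * C * x ^ m := by
  have hP : HasDerivAt (fun x => A * x ^ n + B * x ^ k + C * x ^ m + D)
      (A * (n * x ^ (n - 1)) + B * (k * x ^ (k - 1)) + C * (m * x ^ (m - 1))) x :=
    ((((hasDerivAt_pow n x).const_mul A).add ((hasDerivAt_pow k x).const_mul B)).add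
      ((hasDerivAt_pow m x).const_mul C)).add_const D
  rw [hP.deriv]
  linear_combination A * mul_natCast_mul_pow_sub_one x n + B * mul_natCast_mul_pow_sub_one x k
    + C * mul_natCast_mul_pow_sub_one x m

theorem mul_sub_mul_eq_of_quadrinomial_root {R : Type*} [CommRing R] {A B C D x y M N : R}
    (h0 : A * x ^ 2 * y + B * x * y + C * x + D = 0)
    (h1 : N * A * x * y + (N - M) * B * y + M * C = 0) :
    M * (A * D - B * C) = (N - M) * y * (x * A + B) ^ 2 := by
  linear_combination M * A * h0 - (x * A + B) * h1

theorem stmt_1_general (n m : ℕ) (hm : 0 < m) (hnm : 2 * m < n)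
    (A B C D : ℝ)
    (P : ℝ → ℝ) (hP : P = fun x => A * x ^ n + B * x ^ (n - m) + C * x ^ m + D)
    (α : ℝ) (hα : 0 < α) (h0 : P α = 0) (h1 : deriv P α = 0) :
    (m : ℝ) * α ^ (m - 1) * (A * D - B * C)
      = ((n : ℝ) - m) * α ^ (n - m - 1) * (α ^ m * A + B) ^ 2 ∧
    A * D - B * C = (((n : ℝ) - m) / m) * α ^ (n - 2 * m) * (α ^ m * A + B) ^ 2 := by
  obtain ⟨j, rfl⟩ := Nat.exists_eq_add_of_lt hnm
  have hsub : 2 * m + j + 1 - m = m + j + 1 := by omega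
  have hP0 : A * (α ^ m) ^ 2 * α ^ (j + 1) + B * α ^ m * α ^ (j + 1) + C * α ^ m + D = 0 := by
    rw [← h0, hP, hsub]
    ring
  have hP1 : (2 * m + j + 1 : ℝ) * A * α ^ m * α ^ (j + 1)
      + ((2 * m + j + 1 : ℝ) - m) * B * α ^ (j + 1) + m * C = 0 := by
    refine (mul_eq_zero.mp ?_).resolve_left (pow_ne_zero m hα.ne')
    rw [← mul_zero α, ← h1, hP, mul_deriv_pow_add_pow_add_pow_add_const, hsub]
    push_cast
    ring
  have key := mul_sub_mul_eq_of_quadrinomial_root hP0 hP1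
  have hm₀ : (m : ℝ) ≠ 0 := Nat.cast_ne_zero.mpr hm.ne'
  rw [show 2 * m + j + 1 - m - 1 = m - 1 + (j + 1) by omega, pow_add,
    show 2 * m + j + 1 - 2 * m = j + 1 by omega]
  push_cast
  constructor
  · linear_combination α ^ (m - 1) * key
  · field_simp
    linear_combination key

theorem stmt_1 (n m : ℕ) (hm : 0 < m) (hnm : 2 * m < n)
    (A B C D : ℝ) (hA : A ≠ 0) (hB : B ≠ 0) (hC : C ≠ 0) (hD : D ≠ 0)
    (P : ℝ → ℝ) (hP : P = fun x => A * x ^ n + B * x ^ (n - m) + C * x ^ m + D)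
    (α : ℝ) (hα : 0 < α) (h0 : P α = 0) (h1 : deriv P α = 0) :
    (m : ℝ) * α ^ (m - 1) * (A * D - B * C)
      = ((n : ℝ) - m) * α ^ (n - m - 1) * (α ^ m * A + B) ^ 2 ∧
    A * D - B * C = (((n : ℝ) - m) / m) * α ^ (n - 2 * m) * (α ^ m * A + B) ^ 2 :=
  stmt_1_general n m hm hnm A B C D P hP α hα h0 h1
end

section
/- Let n, m be positive integers with n > 2m, and let A < 0, B > 0, C < 0, D > 0 be real numbers satisfying AD - BC < 0. Then the polynomial P(x) = A x^n + B x^{n-m} + C x^m + D has no positive real root α with P(α) = 0 and P'(α) = 0 simultaneously. -/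
/-!
With `s = α ^ (n - m)` and `t = α ^ m`, the equations `P α = 0` and `α P' α = 0` become
`A s t + B s + C t + D = 0` and `n A s t + (n - m) B s + m C t = 0`. The combination
`(B s + D) · second - (n - m) B s · first` kills the `t`-free terms and leaves `t` times
`m A B s² + (n A D - (n - 2m) B C) s + m C D`, which must therefore vanish. But the middle
coefficient equals `n (A D - B C) + 2 m B C < 0` and, by the sign pattern, the other two are `≤ 0`,
so this quadratic is negative for `s > 0`.
-/

lemma natCast_mul_pow_sub_one_mul {R : Type*} [CommSemiring R] (k : ℕ) (x : R) :
    (k : R) * x ^ (k - 1) * x = k * x ^ k := by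
  cases k <;> simp [pow_succ, mul_assoc]

lemma mul_deriv_monomial_sum (A B C D : ℝ) (n p m : ℕ) (x : ℝ) :
    x * deriv (fun x => A * x ^ n + B * x ^ p + C * x ^ m + D) x
      = n * A * x ^ n + p * B * x ^ p + m * C * x ^ m := by
  have hP : HasDerivAt (fun x => A * x ^ n + B * x ^ p + C * x ^ m + D)
      (A * (n * x ^ (n - 1)) + B * (p * x ^ (p - 1)) + C * (m * x ^ (m - 1))) x :=
    ((((hasDerivAt_pow n x).const_mul A).add ((hasDerivAt_pow p x).const_mul B)).add
      ((hasDerivAt_pow m x).const_mul C)).add_const D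
  rw [hP.deriv]
  linear_combination A * natCast_mul_pow_sub_one_mul n x + B * natCast_mul_pow_sub_one_mul p x
    + C * natCast_mul_pow_sub_one_mul m x

lemma quadratic_resolvent_neg {A B C D n m s : ℝ} (hn : 0 < n) (hm : 0 ≤ m) (hA : A < 0)
    (hB : 0 < B) (hC : C < 0) (hD : 0 < D) (hdet : A * D - B * C < 0) (hs : 0 < s) :
    m * A * B * s ^ 2 + (n * A * D - (n - 2 * m) * B * C) * s + m * C * D < 0 := by
  have hlead : m * A * B * s ^ 2 ≤ 0 := by
    have : A * B < 0 := mul_neg_of_neg_of_pos hA hB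
    have : m * (A * B) ≤ 0 := mul_nonpos_of_nonneg_of_nonpos hm this.le
    nlinarith [sq_nonneg s]
  have hmid : n * A * D - (n - 2 * m) * B * C < 0 := by
    have : B * C < 0 := mul_neg_of_pos_of_neg hB hC
    nlinarith
  have hconst : m * C * D ≤ 0 := by
    have : C * D < 0 := mul_neg_of_neg_of_pos hC hD
    nlinarith
  nlinarith [mul_neg_of_neg_of_pos hmid hs]

theorem false_of_pos_solution_of_det_neg {A B C D n m s t : ℝ} (hn : 0 < n) (hm : 0 ≤ m)
    (hA : A < 0) (hB : 0 < B) (hC : C < 0) (hD : 0 < D) (hdet : A * D - B * C < 0)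
    (hs : 0 < s) (ht : t ≠ 0)
    (hP : A * s * t + B * s + C * t + D = 0)
    (hE : n * A * s * t + (n - m) * B * s + m * C * t = 0) : False := by
  have hres :
      t * (m * A * B * s ^ 2 + (n * A * D - (n - 2 * m) * B * C) * s + m * C * D) = 0 := by
    linear_combination (B * s + D) * hE - (n - m) * B * s * hP
  exact (quadratic_resolvent_neg hn hm hA hB hC hD hdet hs).ne
    ((mul_eq_zero.mp hres).resolve_left ht)

theorem stmt_3_general (n m : ℕ) (hnm : 2 * m < n)
    (A B C D : ℝ) (hA : A < 0) (hB : 0 < B) (hC : C < 0) (hD : 0 < D)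
    (hdet : A * D - B * C < 0)
    (P : ℝ → ℝ) (hP : P = fun x => A * x ^ n + B * x ^ (n - m) + C * x ^ m + D) :
    ¬ ∃ α : ℝ, 0 < α ∧ P α = 0 ∧ deriv P α = 0 := by
  rintro ⟨α, hα, hPα, hP'α⟩
  subst hP
  have hsplit : α ^ n = α ^ (n - m) * α ^ m := by rw [← pow_add, Nat.sub_add_cancel (by omega)]
  have hEuler := mul_deriv_monomial_sum A B C D n (n - m) m α
  rw [hP'α, mul_zero, Nat.cast_sub (by omega), hsplit] at hEuler
  refine false_of_pos_solution_of_det_neg (n := n) (m := m) (Nat.cast_pos.mpr (by omega))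
    (Nat.cast_nonneg m) hA hB hC hD hdet (pow_pos hα (n - m)) (pow_pos hα m).ne' ?_ ?_
  · simpa only [hsplit, mul_assoc] using hPα
  · linear_combination -hEuler

theorem stmt_3 (n m : ℕ) (hm : 0 < m) (hnm : 2 * m < n)
    (A B C D : ℝ) (hA : A < 0) (hB : 0 < B) (hC : C < 0) (hD : 0 < D)
    (hdet : A * D - B * C < 0)
    (P : ℝ → ℝ) (hP : P = fun x => A * x ^ n + B * x ^ (n - m) + C * x ^ m + D) :
    ¬ ∃ α : ℝ, 0 < α ∧ P α = 0 ∧ deriv P α = 0 :=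
  stmt_3_general n m hnm A B C D hA hB hC hD hdet P hP
end

section
/- Let e₁, e₂, f₁, f₂ ≥ 0 and 0 < σ₁ < σ₂. Then (e₁ + e₂ + f₁ + f₂)σ₁σ₂ - (e₁ + f₂)σ₁² - (e₂ + f₁)σ₂² < (σ₂/σ₁)² (e₂ + f₁) (σ₁ - σ₂)², provided e₂ + f₁ > 0. -/
/-! With `A = e₁ + f₂` and `B = e₂ + f₁`, the left-hand side factors as `(σ₂ - σ₁)(Aσ₁ - Bσ₂)`,
which is negative because `A ≤ B` and `σ₁ < σ₂`; the right-hand side is positive. -/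

theorem add_mul_mul_sub_sub_eq {R : Type*} [CommRing R] (A B s t : R) :
    (A + B) * s * t - A * s ^ 2 - B * t ^ 2 = (t - s) * (A * s - B * t) := by
  ring

theorem add_mul_mul_sub_sub_neg {K : Type*} [Field K] [LinearOrder K] [IsStrictOrderedRing K]
    {A B s t : K} (hAB : A ≤ B) (hB : 0 < B) (hs : 0 < s)
    (hst : s < t) : (A + B) * s * t - A * s ^ 2 - B * t ^ 2 < 0 := by
  rw [add_mul_mul_sub_sub_eq]
  have hAs : A * s < B * t :=
    calc A * s ≤ B * s := mul_le_mul_of_nonneg_right hAB hs.le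
      _ < B * t := mul_lt_mul_of_pos_left hst hB
  exact mul_neg_of_pos_of_neg (sub_pos.2 hst) (sub_neg.2 hAs)

theorem stmt_7_general (e₁ e₂ f₁ f₂ σ₁ σ₂ : ℝ)
    (he : e₁ ≤ e₂) (hf : f₂ ≤ f₁)
    (hσ₁ : 0 < σ₁) (hσ : σ₁ < σ₂) (hef : 0 < e₂ + f₁) :
    (e₁ + e₂ + f₁ + f₂) * σ₁ * σ₂ - (e₁ + f₂) * σ₁ ^ 2 - (e₂ + f₁) * σ₂ ^ 2
      < (σ₂ / σ₁) ^ 2 * (e₂ + f₁) * (σ₁ - σ₂) ^ 2 := by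
  have hlhs := add_mul_mul_sub_sub_neg (add_le_add he hf) hef hσ₁ hσ
  have hrhs : 0 < (σ₂ / σ₁) ^ 2 * (e₂ + f₁) * (σ₁ - σ₂) ^ 2 := by
    have hσ₂ : 0 < σ₂ := hσ₁.trans hσ
    have hdiff : σ₁ - σ₂ ≠ 0 := sub_ne_zero.2 hσ.ne
    positivity
  calc (e₁ + e₂ + f₁ + f₂) * σ₁ * σ₂ - (e₁ + f₂) * σ₁ ^ 2 - (e₂ + f₁) * σ₂ ^ 2
      = (e₁ + f₂ + (e₂ + f₁)) * σ₁ * σ₂ - (e₁ + f₂) * σ₁ ^ 2 - (e₂ + f₁) * σ₂ ^ 2 := by ring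
    _ < 0 := hlhs
    _ < _ := hrhs

theorem stmt_7 (e₁ e₂ f₁ f₂ σ₁ σ₂ : ℝ)
    (he₁ : 0 ≤ e₁) (he : e₁ ≤ e₂) (hf₂ : 0 ≤ f₂) (hf : f₂ ≤ f₁)
    (hσ₁ : 0 < σ₁) (hσ : σ₁ < σ₂) (hef : 0 < e₂ + f₁) :
    (e₁ + e₂ + f₁ + f₂) * σ₁ * σ₂ - (e₁ + f₂) * σ₁ ^ 2 - (e₂ + f₁) * σ₂ ^ 2
      < (σ₂ / σ₁) ^ 2 * (e₂ + f₁) * (σ₁ - σ₂) ^ 2 :=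
  stmt_7_general e₁ e₂ f₁ f₂ σ₁ σ₂ he hf hσ₁ hσ hef
end

section
/- Let n > 2m > 0 be integers and let A < 0, B > 0, C < 0, D > 0 be reals with AD - BC < 0. Then the polynomial P(x) = A x^n + B x^{n-m} + C x^m + D has exactly one positive real root. -/
/-!
Write `P x = x ^ k * (A * x ^ m + B) + (C * x ^ m + D)` with `k = n - m`. At a positive root the four
terms `-A α ^ n, B α ^ k, -C α ^ m, D` are positive, balance in pairs, and `AD - BC < 0` says that the
product of the outer two exceeds that of the inner two; this forces `A α ^ m + B < 0`. Past such a
root both brackets strictly decrease, so `P` stays negative. Hence there is at most one positive root,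
and one exists since `P 0 = D > 0` while `P x → -∞`.
-/

open Filter

/-- The paper's polynomial with `n = k + m`. -/
def quadrinomial (A B C D : ℝ) (k m : ℕ) (x : ℝ) : ℝ :=
  A * x ^ (k + m) + B * x ^ k + C * x ^ m + D

lemma lt_of_add_eq_add_of_mul_lt_mul {a b c d : ℝ} (hb : 0 ≤ b) (hd : 0 ≤ d)
    (hsum : a + c = b + d) (hmul : b * c < a * d) : b < a := by
  by_contra! hab
  have hdc : d ≤ c := by linarith
  exact (mul_le_mul hab hdc hd hb).not_gt hmul

namespace quadrinomial

variable {A B C D : ℝ} {k m : ℕ}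

lemma eq_mul_add (x : ℝ) :
    quadrinomial A B C D k m x = x ^ k * (A * x ^ m + B) + (C * x ^ m + D) := by
  rw [quadrinomial, pow_add]
  ring

lemma continuous : Continuous (quadrinomial A B C D k m) := by
  unfold quadrinomial
  fun_prop

lemma eval_zero (hk : k ≠ 0) (hm : m ≠ 0) : quadrinomial A B C D k m 0 = D := by
  simp [quadrinomial, hk, hm]

lemma add_lt_zero_of_root (hB : 0 < B) (hD : 0 < D)
    (hdet : A * D - B * C < 0) {α : ℝ} (hα : 0 < α) (hroot : quadrinomial A B C D k m α = 0) :
    A * α ^ m + B < 0 := by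
  have hαk : 0 < α ^ k := pow_pos hα k
  have hαkm : 0 < α ^ (k + m) := pow_pos hα _
  have hinner_lt_outer : B * α ^ k < -A * α ^ (k + m) := by
    refine lt_of_add_eq_add_of_mul_lt_mul (c := -C * α ^ m) (d := D) (by positivity) hD.le
      (by rw [quadrinomial] at hroot; linarith) ?_
    calc B * α ^ k * (-C * α ^ m) = -(B * C) * α ^ (k + m) := by rw [pow_add]; ring
      _ < -(A * D) * α ^ (k + m) := mul_lt_mul_of_pos_right (by linarith) hαkm
      _ = -A * α ^ (k + m) * D := by ring
  have : α ^ k * B < α ^ k * (-(A * α ^ m)) := by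
    rw [pow_add] at hinner_lt_outer
    linarith
  linarith [lt_of_mul_lt_mul_left this hαk.le]

lemma lt_of_lt_of_add_neg (hA : A ≤ 0) (hC : C < 0) (hm : m ≠ 0) {α x : ℝ} (hα : 0 < α)
    (hαx : α < x) (hneg : A * α ^ m + B < 0) :
    quadrinomial A B C D k m x < quadrinomial A B C D k m α := by
  have hpow : α ^ m < x ^ m := pow_lt_pow_left₀ hαx hα.le hm
  have hlin : A * x ^ m + B ≤ A * α ^ m + B := by
    linarith [mul_le_mul_of_nonpos_left hpow.le hA]
  have hfirst : x ^ k * (A * x ^ m + B) ≤ α ^ k * (A * α ^ m + B) :=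
    calc x ^ k * (A * x ^ m + B) ≤ α ^ k * (A * x ^ m + B) :=
          mul_le_mul_of_nonpos_right (pow_le_pow_left₀ hα.le hαx.le k) (by linarith)
      _ ≤ α ^ k * (A * α ^ m + B) := mul_le_mul_of_nonneg_left hlin (by positivity)
  have hsecond : C * x ^ m + D < C * α ^ m + D := by
    linarith [mul_lt_mul_of_neg_left hpow hC]
  rw [eq_mul_add, eq_mul_add]
  linarith

lemma exists_pos_lt_zero (hA : A < 0) (hC : C ≤ 0) (hm : m ≠ 0) :
    ∃ x, 0 < x ∧ quadrinomial A B C D k m x < 0 := by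
  have hlin : Tendsto (fun x : ℝ => A * x ^ m + B) atTop atBot :=
    tendsto_atBot_add_const_right _ B ((tendsto_pow_atTop hm).const_mul_atTop_of_neg hA)
  obtain ⟨x, hx1, hxD⟩ :=
    ((eventually_ge_atTop 1).and (hlin.eventually_lt_atBot (min (-D) 0))).exists
  have hxk : 1 ≤ x ^ k := one_le_pow₀ hx1
  have hCx : C * x ^ m ≤ 0 := mul_nonpos_of_nonpos_of_nonneg hC (by positivity)
  have hfirst : x ^ k * (A * x ^ m + B) ≤ 1 * (A * x ^ m + B) :=
    mul_le_mul_of_nonpos_right hxk (by linarith [min_le_right (-D) 0])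
  refine ⟨x, by linarith, ?_⟩
  rw [eq_mul_add]
  linarith [min_le_left (-D) 0]

lemma exists_pos_root (hA : A < 0) (hC : C ≤ 0) (hD : 0 < D) (hk : k ≠ 0) (hm : m ≠ 0) :
    ∃ α, 0 < α ∧ quadrinomial A B C D k m α = 0 := by
  obtain ⟨x, hx, hneg⟩ := exists_pos_lt_zero (B := B) (D := D) (k := k) hA hC hm
  have hzero : (0 : ℝ) ∈ Set.Ioo (quadrinomial A B C D k m x) (quadrinomial A B C D k m 0) := by
    rw [eval_zero hk hm]
    exact ⟨hneg, hD⟩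
  obtain ⟨α, hα, hroot⟩ := intermediate_value_Ioo' hx.le continuous.continuousOn hzero
  exact ⟨α, hα.1, hroot⟩

theorem existsUnique_pos_root (hA : A < 0) (hB : 0 < B) (hC : C < 0) (hD : 0 < D)
    (hdet : A * D - B * C < 0) (hk : k ≠ 0) (hm : m ≠ 0) :
    ∃! α, 0 < α ∧ quadrinomial A B C D k m α = 0 := by
  have no_root_beyond : ∀ α x, 0 < α → quadrinomial A B C D k m α = 0 → α < x →
      quadrinomial A B C D k m x ≠ 0 := fun α x hα hroot hαx =>
    (hroot ▸ lt_of_lt_of_add_neg hA.le hC hm hα hαx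
      (add_lt_zero_of_root hB hD hdet hα hroot)).ne
  obtain ⟨α, hα, hroot⟩ := exists_pos_root (B := B) hA hC.le hD hk hm
  refine ⟨α, ⟨hα, hroot⟩, fun β ⟨hβ, hβroot⟩ => ?_⟩
  rcases lt_trichotomy β α with hβα | rfl | hαβ
  · exact absurd hroot (no_root_beyond β α hβ hβroot hβα)
  · rfl
  · exact absurd hβroot (no_root_beyond α β hα hroot hαβ)

end quadrinomial

theorem stmt_9 (n m : ℕ) (hm : 0 < m) (hnm : 2 * m < n)
    (A B C D : ℝ) (hA : A < 0) (hB : 0 < B) (hC : C < 0) (hD : 0 < D)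
    (hdet : A * D - B * C < 0)
    (P : ℝ → ℝ) (hP : P = fun x => A * x ^ n + B * x ^ (n - m) + C * x ^ m + D) :
    ∃! α : ℝ, 0 < α ∧ P α = 0 := by
  obtain ⟨k, rfl⟩ : ∃ k, n = k + m := ⟨n - m, by omega⟩
  have hPq : P = quadrinomial A B C D k m := by
    rw [hP, Nat.add_sub_cancel]
    rfl
  rw [hPq]
  exact quadrinomial.existsUnique_pos_root hA hB hC hD hdet (by omega) hm.ne'
end
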